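/- arXiv:2409.10495 — 2 statements merged into one kernel-verified Lean document; each statement's English description precedes it below -/
import Mathlib

section
/- For any A in the particle-number preserving CAR algebra 𝔄₀ and f₁,…,fₙ,g₁,…,gₙ ∈ 𝔥, one has lim_{|x|→∞} ⟨a*(g₁)⋯a*(g_{n-1})a*(T_x gₙ)Ω, A a*(f₁)⋯a*(f_{n-1})a*(T_x fₙ)Ω⟩ = ⟨a*(g₁)⋯a*(g_{n-1})Ω, A a*(f₁)⋯a*(f_{n-1})Ω⟩ · ⟨gₙ, fₙ⟩. -/
/-! Write `Z x = a*(T_x fₙ)`. Every `A ∈ 𝔄₀` asymptotically commutes with `Z x`: the commutator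
`A Z x - Z x A` tends strongly to `0`. Indeed `a*(v)` anticommutes with `Z x`, the anticommutator
of `a(v)` with `Z x` is `⟨v, T_x fₙ⟩ → 0`, a balanced monomial collects the sign `(-1)^(2k) = 1`,
and the property survives norm limits because the `Z x` are uniformly bounded. Moving `Z x` past
the creation operators and past `A`, and then using
`a(T_x gₙ) a*(T_x fₙ) = ⟨gₙ, fₙ⟩ - a*(T_x fₙ) a(T_x gₙ)`, leaves `⟨gₙ, fₙ⟩` times the expected
expectation plus a term containing `a(T_x fₙ) a*(g₁)⋯a*(g_{n-1}) Ω`, which tends to `0`. -/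

noncomputable section

open ContinuousLinearMap Filter

variable {H F : Type*} [NormedAddCommGroup H] [InnerProductSpace ℂ H]
  [NormedAddCommGroup F] [InnerProductSpace ℂ F] [CompleteSpace F]

/-- The product `a*(h₁)⋯a*(hₙ)` of creation operators. -/
def creaProd (crea : H → F →L[ℂ] F) {n : ℕ} (h : Fin n → H) : F →L[ℂ] F :=
  (List.ofFn fun i => crea (h i)).prod

/-- The product `a(h₁)⋯a(hₙ)` of annihilation operators. -/
def annProd (crea : H → F →L[ℂ] F) {n : ℕ} (h : Fin n → H) : F →L[ℂ] F :=
  (List.ofFn fun i => adjoint (crea (h i))).prod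

/-- The particle number preserving CAR algebra `𝔄₀`: the norm closure of the linear span of
the balanced products `a*(f₁)⋯a*(fₖ)a(g₁)⋯a(gₖ)`. -/
def ppCAR (crea : H → F →L[ℂ] F) : Set (F →L[ℂ] F) :=
  closure (Submodule.span ℂ
    {X | ∃ (k : ℕ) (u v : Fin k → H), X = creaProd crea u * annProd crea v} : Set (F →L[ℂ] F))

open scoped InnerProductSpace Topology

section CommutatorLimit

variable {𝕜 E α : Type*} [NontriviallyNormedField 𝕜] [NormedAddCommGroup E] [NormedSpace 𝕜 E]

theorem isClosed_setOf_tendsto_zero_of_norm_le {G : Type*} [NormedAddCommGroup G]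
    [NormedSpace 𝕜 G] {l : Filter α} (Φ : α → E →L[𝕜] G) {C : ℝ} (hΦ : ∀ x v, ‖Φ x v‖ ≤ C * ‖v‖) :
    IsClosed {v | Tendsto (fun x => Φ x v) l (𝓝 0)} :=
  Equicontinuous.isClosed_setOfPred_tendsto
    (((NormedSpace.equicontinuous_TFAE Φ).out 3 1).mp
      (show ∃ C, ∀ x v, ‖Φ x v‖ ≤ C * ‖v‖ from ⟨C, hΦ⟩)) continuous_const

def CommutatorTendstoZero (l : Filter α) (Z : α → E →L[𝕜] E) (s : 𝕜) (X : E →L[𝕜] E) : Prop :=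
  ∀ ψ : E, Tendsto (fun x => (X * Z x - s • (Z x * X)) ψ) l (𝓝 0)

variable {l : Filter α} {Z : α → E →L[𝕜] E}

namespace CommutatorTendstoZero

theorem mul {s t : 𝕜} {X Y : E →L[𝕜] E} (hX : CommutatorTendstoZero l Z s X)
    (hY : CommutatorTendstoZero l Z t Y) : CommutatorTendstoZero l Z (s * t) (X * Y) := by
  intro ψ
  have h := ((X.continuous.tendsto 0).comp (hY ψ)).add ((hX (Y ψ)).const_smul t)
  rw [map_zero, smul_zero, add_zero] at h
  refine h.congr fun x => ?_
  simp only [Function.comp_apply, sub_apply, mul_apply_eq_comp, smul_apply, map_sub, map_smul]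
  module

theorem list_prod {s : 𝕜} {L : List (E →L[𝕜] E)} (h : ∀ X ∈ L, CommutatorTendstoZero l Z s X) :
    CommutatorTendstoZero l Z (s ^ L.length) L.prod := by
  induction L with
  | nil => intro ψ; simpa using tendsto_const_nhds
  | cons X L ih =>
    rw [List.prod_cons, List.length_cons, pow_succ']
    exact (h X List.mem_cons_self).mul (ih fun Y hY => h Y (List.mem_cons_of_mem X hY))

theorem of_anticommutator {X : E →L[𝕜] E} {c : α → 𝕜} (hc : Tendsto c l (𝓝 0))
    (h : ∀ x, X * Z x + Z x * X = c x • 1) : CommutatorTendstoZero l Z (-1) X := by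
  intro ψ
  simpa [neg_one_smul, sub_neg_eq_add, h] using hc.smul_const ψ

end CommutatorTendstoZero

variable (l Z) in
def commutatorTendstoZeroSubmodule (s : 𝕜) : Submodule 𝕜 (E →L[𝕜] E) where
  carrier := {X | CommutatorTendstoZero l Z s X}
  add_mem' {X Y} hX hY ψ := by
    simpa [add_mul, mul_add, smul_add, add_sub_add_comm] using (hX ψ).add (hY ψ)
  zero_mem' ψ := by simpa using tendsto_const_nhds
  smul_mem' a X hX ψ := by
    simpa [smul_sub, smul_comm s a] using (hX ψ).const_smul a

theorem isClosed_setOf_commutatorTendstoZero {C : ℝ} (hZ : ∀ x, ‖Z x‖ ≤ C) (s : 𝕜) :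
    IsClosed {X | CommutatorTendstoZero l Z s X} := by
  simp only [CommutatorTendstoZero, Set.ofPred_forall]
  refine isClosed_iInter fun ψ => isClosed_setOf_tendsto_zero_of_norm_le
    (fun x => apply 𝕜 E (Z x ψ) - s • (Z x).comp (apply 𝕜 E ψ)) (C := (1 + ‖s‖) * C * ‖ψ‖)
    fun x X => ?_
  have hZψ : ‖X (Z x ψ)‖ ≤ ‖X‖ * (C * ‖ψ‖) :=
    X.le_opNorm_of_le ((Z x).le_of_opNorm_le (hZ x) ψ)
  have hZX : ‖Z x (X ψ)‖ ≤ C * (‖X‖ * ‖ψ‖) :=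
    ((Z x).le_opNorm_of_le (X.le_opNorm ψ)).trans
      (mul_le_mul_of_nonneg_right (hZ x) (by positivity))
  calc ‖X (Z x ψ) - s • Z x (X ψ)‖ ≤ ‖X (Z x ψ)‖ + ‖s‖ * ‖Z x (X ψ)‖ := by
        rw [← norm_smul]; exact norm_sub_le _ _
    _ ≤ ‖X‖ * (C * ‖ψ‖) + ‖s‖ * (C * (‖X‖ * ‖ψ‖)) := by gcongr
    _ = (1 + ‖s‖) * C * ‖ψ‖ * ‖X‖ := by ring

end CommutatorLimit

theorem list_prod_mul_eq_pow_smul {R A : Type*} [CommSemiring R] [Semiring A] [Algebra R A]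
    {L : List A} {y : A} {s : R} (h : ∀ x ∈ L, x * y = s • (y * x)) :
    L.prod * y = s ^ L.length • (y * L.prod) := by
  induction L with
  | nil => simp
  | cons x L ih =>
    rw [List.prod_cons, List.length_cons, mul_assoc,
      ih fun z hz => h z (List.mem_cons_of_mem x hz), mul_smul_comm, ← mul_assoc,
      h x List.mem_cons_self, smul_mul_assoc, smul_smul, mul_assoc, pow_succ]

theorem tendsto_inner_zero_of_norm_mul {E α : Type*} [NormedAddCommGroup E]
    [InnerProductSpace ℂ E] {l : Filter α} {u v : α → E}
    (h : Tendsto (fun x => ‖u x‖ * ‖v x‖) l (𝓝 0)) :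
    Tendsto (fun x => ⟪u x, v x⟫_ℂ) l (𝓝 0) :=
  squeeze_zero_norm (fun _ => norm_inner_le_norm _ _) h

section CreationProducts

variable {ι V α : Type*} [NormedAddCommGroup V] [InnerProductSpace ℂ V] {crea : ι → V →L[ℂ] V}
  {l : Filter α}

theorem creaProd_apply_crea (hcar₁ : ∀ f g : ι, crea f * crea g + crea g * crea f = 0)
    {n : ℕ} (u : Fin n → ι) (h : ι) (ψ : V) :
    creaProd crea u (crea h ψ) = (-1 : ℂ) ^ n • crea h (creaProd crea u ψ) := by
  have := list_prod_mul_eq_pow_smul (L := List.ofFn fun i => crea (u i)) (y := crea h)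
    (s := (-1 : ℂ)) (by
      simp only [List.mem_ofFn, forall_exists_index]
      rintro _ i rfl
      rw [neg_one_smul, eq_neg_iff_add_eq_zero, hcar₁])
  rw [List.length_ofFn] at this
  have hψ := congrArg (fun B : V →L[ℂ] V => B ψ) this
  simp only [mul_apply_eq_comp, smul_apply] at hψ
  exact hψ

theorem CommutatorTendstoZero.creaProd {Z : α → V →L[ℂ] V}
    (h : ∀ v, CommutatorTendstoZero l Z (-1) (crea v)) {k : ℕ} (u : Fin k → ι) :
    CommutatorTendstoZero l Z ((-1) ^ k) (creaProd crea u) := by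
  have := list_prod (l := l) (Z := Z) (s := -1) (L := List.ofFn fun i => crea (u i))
    (by simp [List.mem_ofFn, h])
  rwa [List.length_ofFn] at this

theorem CommutatorTendstoZero.annProd [CompleteSpace V] {Z : α → V →L[ℂ] V}
    (h : ∀ v, CommutatorTendstoZero l Z (-1) (adjoint (crea v))) {k : ℕ} (u : Fin k → ι) :
    CommutatorTendstoZero l Z ((-1) ^ k) (annProd crea u) := by
  have := list_prod (l := l) (Z := Z) (s := -1) (L := List.ofFn fun i => adjoint (crea (u i)))
    (by simp [List.mem_ofFn, h])
  rwa [List.length_ofFn] at this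

theorem commutatorTendstoZero_crea (hcar₁ : ∀ f g : ι, crea f * crea g + crea g * crea f = 0)
    (w : α → ι) (v : ι) : CommutatorTendstoZero l (fun x => crea (w x)) (-1) (crea v) :=
  .of_anticommutator (c := 0) tendsto_const_nhds fun x => by rw [hcar₁, Pi.zero_apply, zero_smul]

end CreationProducts

section CAR

variable {crea : H → F →L[ℂ] F} {α : Type*} {l : Filter α}

theorem norm_crea_apply_sq_add
    (hcar₂ : ∀ f g : H, adjoint (crea f) * crea g + crea g * adjoint (crea f)
      = (inner ℂ f g : ℂ) • (1 : F →L[ℂ] F)) (h : H) (ψ : F) :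
    ‖crea h ψ‖ ^ 2 + ‖adjoint (crea h) ψ‖ ^ 2 = ‖h‖ ^ 2 * ‖ψ‖ ^ 2 := by
  have := congrArg (fun B : F →L[ℂ] F => ⟪ψ, B ψ⟫_ℂ) (hcar₂ h h)
  simp only [add_apply, mul_apply_eq_comp, smul_apply, one_apply_eq_self, inner_add_right,
    inner_smul_right, adjoint_inner_right] at this
  rw [← adjoint_inner_left (crea h) (adjoint (crea h) ψ) ψ] at this
  simp only [inner_self_eq_norm_sq_to_K] at this
  exact_mod_cast this

theorem norm_crea_le
    (hcar₂ : ∀ f g : H, adjoint (crea f) * crea g + crea g * adjoint (crea f)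
      = (inner ℂ f g : ℂ) • (1 : F →L[ℂ] F)) (h : H) :
    ‖crea h‖ ≤ ‖h‖ := by
  refine opNorm_le_bound _ (norm_nonneg h) fun ψ => ?_
  refine (pow_le_pow_iff_left₀ (norm_nonneg _) (by positivity) two_ne_zero).mp ?_
  rw [mul_pow, ← norm_crea_apply_sq_add hcar₂]
  exact le_add_of_nonneg_right (sq_nonneg _)

theorem commutatorTendstoZero_adjoint_crea
    (hcar₂ : ∀ f g : H, adjoint (crea f) * crea g + crea g * adjoint (crea f)
      = (inner ℂ f g : ℂ) • (1 : F →L[ℂ] F))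
    {w : α → H} (hw : ∀ u, Tendsto (fun x => ⟪u, w x⟫_ℂ) l (𝓝 0)) (v : H) :
    CommutatorTendstoZero l (fun x => crea (w x)) (-1) (adjoint (crea v)) :=
  .of_anticommutator (hw v) fun x => hcar₂ v (w x)

theorem commutatorTendstoZero_crea_along_annihilators
    (hcar₂ : ∀ f g : H, adjoint (crea f) * crea g + crea g * adjoint (crea f)
      = (inner ℂ f g : ℂ) • (1 : F →L[ℂ] F))
    {w : α → H} (hw : ∀ u, Tendsto (fun x => ⟪u, w x⟫_ℂ) l (𝓝 0)) (v : H) :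
    CommutatorTendstoZero l (fun x => adjoint (crea (w x))) (-1) (crea v) := by
  refine .of_anticommutator (c := fun x => ⟪w x, v⟫_ℂ) ?_ fun x => by
    rw [add_comm]; exact hcar₂ (w x) v
  simpa only [Function.comp_def, inner_conj_symm, map_zero] using
    (Complex.continuous_conj.tendsto 0).comp (hw v)

theorem commutatorTendstoZero_of_mem_ppCAR
    (hcar₁ : ∀ f g : H, crea f * crea g + crea g * crea f = 0)
    (hcar₂ : ∀ f g : H, adjoint (crea f) * crea g + crea g * adjoint (crea f)
      = (inner ℂ f g : ℂ) • (1 : F →L[ℂ] F))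
    {w : α → H} (hw : ∀ u, Tendsto (fun x => ⟪u, w x⟫_ℂ) l (𝓝 0)) {C : ℝ}
    (hwC : ∀ x, ‖w x‖ ≤ C) {A : F →L[ℂ] F} (hA : A ∈ ppCAR crea) :
    CommutatorTendstoZero l (fun x => crea (w x)) 1 A := by
  refine closure_minimal
    (Submodule.span_le (p := commutatorTendstoZeroSubmodule l (fun x => crea (w x)) 1).mpr ?_)
    (isClosed_setOf_commutatorTendstoZero (fun x => (norm_crea_le hcar₂ (w x)).trans (hwC x)) 1)
    hA
  rintro _ ⟨k, u, v, rfl⟩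
  have := (CommutatorTendstoZero.creaProd (commutatorTendstoZero_crea hcar₁ w) u).mul
    (CommutatorTendstoZero.annProd (commutatorTendstoZero_adjoint_crea hcar₂ hw) v)
  rwa [← mul_pow, neg_one_mul, neg_neg, one_pow] at this

theorem tendsto_adjoint_crea_creaProd_vacuum
    (hcar₂ : ∀ f g : H, adjoint (crea f) * crea g + crea g * adjoint (crea f)
      = (inner ℂ f g : ℂ) • (1 : F →L[ℂ] F))
    {Ω : F} (hvac : ∀ f : H, adjoint (crea f) Ω = 0)
    {w : α → H} (hw : ∀ u, Tendsto (fun x => ⟪u, w x⟫_ℂ) l (𝓝 0)) {n : ℕ} (u : Fin n → H) :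
    Tendsto (fun x => adjoint (crea (w x)) (creaProd crea u Ω)) l (𝓝 0) := by
  have h := ((CommutatorTendstoZero.creaProd
    (commutatorTendstoZero_crea_along_annihilators hcar₂ hw) u Ω).neg).const_smul ((-1 : ℂ) ^ n)
  simp only [sub_apply, mul_apply_eq_comp, smul_apply, hvac, map_zero, zero_sub, neg_neg,
    smul_smul, ← mul_pow, neg_one_mul, one_pow, one_smul, neg_zero, smul_zero] at h
  exact h

theorem tendsto_inner_crea_apply_crea
    (hcar₂ : ∀ f g : H, adjoint (crea f) * crea g + crea g * adjoint (crea f)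
      = (inner ℂ f g : ℂ) • (1 : F →L[ℂ] F))
    {w w' : α → H} {C : ℝ} (hw' : ∀ x, ‖w' x‖ ≤ C) {c : ℂ} (hc : ∀ x, ⟪w' x, w x⟫_ℂ = c)
    {φ χ : F} (hφ : Tendsto (fun x => adjoint (crea (w x)) φ) l (𝓝 0)) {A : F →L[ℂ] F}
    (hA : CommutatorTendstoZero l (fun x => crea (w x)) 1 A) :
    Tendsto (fun x => ⟪crea (w' x) φ, A (crea (w x) χ)⟫_ℂ) l (𝓝 (⟪φ, A χ⟫_ℂ * c)) := by
  have hbound : ∀ x ψ, ‖crea (w' x) ψ‖ ≤ C * ‖ψ‖ ∧ ‖adjoint (crea (w' x)) ψ‖ ≤ C * ‖ψ‖ :=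
    fun x ψ => ⟨(crea (w' x)).le_of_opNorm_le ((norm_crea_le hcar₂ _).trans (hw' x)) ψ,
      (adjoint (crea (w' x))).le_of_opNorm_le
        (((adjoint).norm_map _).trans_le ((norm_crea_le hcar₂ _).trans (hw' x))) ψ⟩
  have hcomm : Tendsto (fun x => ⟪crea (w' x) φ,
      (A * crea (w x) - (1 : ℂ) • (crea (w x) * A)) χ⟫_ℂ) l (𝓝 0) :=
    tendsto_inner_zero_of_norm_mul <| isBoundedUnder_le_mul_tendsto_zero
      (isBoundedUnder_of ⟨C * ‖φ‖, fun x => (norm_norm _).trans_le (hbound x φ).1⟩)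
      (tendsto_zero_iff_norm_tendsto_zero.mp (hA χ))
  have hann : Tendsto (fun x => ⟪adjoint (crea (w x)) φ,
      adjoint (crea (w' x)) (A χ)⟫_ℂ) l (𝓝 0) :=
    tendsto_inner_zero_of_norm_mul <|
      (tendsto_zero_iff_norm_tendsto_zero.mp hφ).zero_mul_isBoundedUnder_le
      (isBoundedUnder_of ⟨C * ‖A χ‖, fun x => (norm_norm _).trans_le (hbound x (A χ)).2⟩)
  have hsum := hcomm.add ((tendsto_const_nhds (x := ⟪φ, A χ⟫_ℂ * c)).sub hann)
  rw [sub_zero, zero_add] at hsum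
  refine hsum.congr fun x => ?_
  have hcar := congrArg (fun B : F →L[ℂ] F => ⟪φ, B (A χ)⟫_ℂ) (hcar₂ (w' x) (w x))
  simp only [add_apply, mul_apply_eq_comp, smul_apply, one_apply_eq_self, inner_add_right,
    inner_smul_right, hc x] at hcar
  rw [adjoint_inner_right (crea (w' x)) φ, ← adjoint_inner_left (crea (w x)) _ φ] at hcar
  simp only [sub_apply, mul_apply_eq_comp, one_smul, inner_sub_right]
  linear_combination -hcar

end CAR

theorem clustering_ppCAR (d : ℕ)
    (crea : H → F →L[ℂ] F) (Ω : F)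
    (hcar₁ : ∀ f g : H, crea f * crea g + crea g * crea f = 0)
    (hcar₂ : ∀ f g : H,
      adjoint (crea f) * crea g + crea g * adjoint (crea f)
        = (inner ℂ f g : ℂ) • (1 : F →L[ℂ] F))
    (hvac : ∀ f : H, adjoint (crea f) Ω = 0)
    -- the translations T_x : unitary, tending weakly to zero as |x| → ∞
    (T : EuclideanSpace ℝ (Fin d) → H →L[ℂ] H)
    (hTiso : ∀ x u, ‖T x u‖ = ‖u‖)
    (hTweak : ∀ u v : H,
      Tendsto (fun x => (inner ℂ u (T x v) : ℂ))
        (Bornology.cobounded (EuclideanSpace ℝ (Fin d))) (nhds 0))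
    (A : F →L[ℂ] F) (hA : A ∈ ppCAR crea)
    (n : ℕ) (f g : Fin (n + 1) → H) :
    Tendsto
      (fun x : EuclideanSpace ℝ (Fin d) =>
        (inner ℂ
          (creaProd crea (fun i : Fin n => g i.castSucc) (crea (T x (g (Fin.last n))) Ω))
          (A (creaProd crea (fun i : Fin n => f i.castSucc) (crea (T x (f (Fin.last n))) Ω)))
          : ℂ))
      (Bornology.cobounded (EuclideanSpace ℝ (Fin d)))
      (nhds
        ((inner ℂ (creaProd crea (fun i : Fin n => g i.castSucc) Ω)
            (A (creaProd crea (fun i : Fin n => f i.castSucc) Ω)) : ℂ)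
          * (inner ℂ (g (Fin.last n)) (f (Fin.last n)) : ℂ))) := by
  set w := fun x => T x (f (Fin.last n))
  set w' := fun x => T x (g (Fin.last n))
  have hw : ∀ u, Tendsto (fun x => ⟪u, w x⟫_ℂ) _ (𝓝 0) := fun u => hTweak u _
  have hc : ∀ x, ⟪w' x, w x⟫_ℂ = ⟪g (Fin.last n), f (Fin.last n)⟫_ℂ := fun x =>
    LinearIsometry.inner_map_map ⟨(T x).toLinearMap, hTiso x⟩ _ _
  have hA' := commutatorTendstoZero_of_mem_ppCAR hcar₁ hcar₂ hw (fun x => (hTiso x _).le) hA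
  have hann_vac := tendsto_adjoint_crea_creaProd_vacuum hcar₂ hvac hw fun i : Fin n => g i.castSucc
  refine (tendsto_inner_crea_apply_crea hcar₂ (fun x => (hTiso x _).le) hc hann_vac hA').congr
    fun x => ?_
  rw [creaProd_apply_crea hcar₁, creaProd_apply_crea hcar₁, map_smul, inner_smul_left,
    inner_smul_right, ← mul_assoc, map_pow, map_neg, map_one, ← mul_pow, neg_one_mul, neg_neg,
    one_pow, one_mul]
end
end

section
/- The Dyson series D_{n,l}(t) for the interaction picture evolution of a*(f), defined recursively by D_{n,0}(t) = a*(f)|_{ℱₙ} and D_{n,l+1}(t) = i∫₀ᵗ [D_{n,l}(s), 𝐕(s)]|_{ℱₙ} ds, satisfies the norm bound ‖D_{n,l}(t)‖ ≤ (|t|^l / l!) (‖Vₙ‖ + ‖V_{n+1}‖)^l ‖f‖; consequently the series Σ_l D_{n,l}(t) converges absolutely in operator norm and each t ↦ D_{n,l}(t) is norm-continuous. -/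
/-!
Each Dyson term is obtained from the previous one by integrating the commutator with the
freely evolved interaction, whose norm is at most `‖Vₙ‖ + ‖Vₙ₊₁‖` times that of the previous
term. Inductively the integrand is bounded by a multiple of `|s|^l / l!`, and integrating
produces `|t|^(l+1) / (l+1)!`; the same integral bound over `[t₀, t]` gives norm continuity.
Summability follows by comparison with the exponential series.
-/

noncomputable section

open scoped Nat

open MeasureTheory Filter Topology

section StrongContinuity

variable {𝕜 X F G : Type*} [NontriviallyNormedField 𝕜] [TopologicalSpace X]
  [NormedAddCommGroup F] [NormedSpace 𝕜 F] [NormedAddCommGroup G] [NormedSpace 𝕜 G]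

theorem continuous_clm_apply_of_forall_norm_le {T : X → F →L[𝕜] G} {C : ℝ}
    (hT : ∀ s, ‖T s‖ ≤ C) (hTc : ∀ y, Continuous fun s => T s y) {y : X → F}
    (hy : Continuous y) : Continuous fun s => T s (y s) := by
  refine continuous_iff_continuousAt.mpr fun s₀ => ?_
  have hsmall : Tendsto (fun s => T s (y s - y s₀)) (𝓝 s₀) (𝓝 0) := by
    refine squeeze_zero_norm (fun s => ((T s).le_opNorm _).trans
      (mul_le_mul_of_nonneg_right (hT s) (norm_nonneg _))) ?_
    have hdist : Continuous fun s => C * ‖y s - y s₀‖ := by fun_prop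
    simpa using hdist.tendsto s₀
  simpa [ContinuousAt] using hsmall.add ((hTc (y s₀)).tendsto s₀)

end StrongContinuity

section IntegralOperator

variable {𝕜 E F : Type*} [NontriviallyNormedField 𝕜] [NormedAddCommGroup E] [NormedSpace 𝕜 E]
  [NormedAddCommGroup F] [NormedSpace 𝕜 F] [NormedSpace ℝ F]
  {G : ℝ → E →L[𝕜] F} {g : ℝ → ℝ} {D : ℝ → E →L[𝕜] F}

theorem norm_sub_le_abs_integral_of_apply_eq_integral (hG : ∀ x, Continuous fun s => G s x)
    (hg : Continuous g) (hGg : ∀ s, ‖G s‖ ≤ g s)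
    (hD : ∀ t x, D t x = ∫ s in (0 : ℝ)..t, G s x) (a b : ℝ) :
    ‖D b - D a‖ ≤ |∫ s in a..b, g s| := by
  refine ContinuousLinearMap.opNorm_le_bound _ (abs_nonneg _) fun x => ?_
  have hint : ∀ a b, IntervalIntegrable (fun s => G s x) volume a b :=
    fun a b => (hG x).intervalIntegrable a b
  calc ‖(D b - D a) x‖ = ‖∫ s in a..b, G s x‖ := by
        rw [sub_apply, hD, hD,
          intervalIntegral.integral_interval_sub_left (hint 0 b) (hint 0 a)]
    _ ≤ |∫ s in a..b, g s * ‖x‖| :=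
        intervalIntegral.norm_integral_le_abs_of_norm_le
          (Eventually.of_forall fun s => (G s).le_of_opNorm_le (hGg s) x)
          ((hg.mul continuous_const).intervalIntegrable a b)
    _ = |∫ s in a..b, g s| * ‖x‖ := by
        rw [intervalIntegral.integral_mul_const, abs_mul, abs_norm]

theorem continuous_of_apply_eq_integral (hG : ∀ x, Continuous fun s => G s x)
    (hg : Continuous g) (hGg : ∀ s, ‖G s‖ ≤ g s)
    (hD : ∀ t x, D t x = ∫ s in (0 : ℝ)..t, G s x) : Continuous D := by
  refine continuous_iff_continuousAt.mpr fun t₀ => ?_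
  rw [ContinuousAt, tendsto_iff_norm_sub_tendsto_zero]
  refine squeeze_zero (fun _ => norm_nonneg _)
    (norm_sub_le_abs_integral_of_apply_eq_integral hG hg hGg hD t₀) ?_
  simpa using ((intervalIntegral.continuous_primitive
    (fun a b => hg.intervalIntegrable a b) t₀).abs.tendsto t₀)

theorem norm_le_abs_integral_of_apply_eq_integral (hG : ∀ x, Continuous fun s => G s x)
    (hg : Continuous g) (hGg : ∀ s, ‖G s‖ ≤ g s)
    (hD : ∀ t x, D t x = ∫ s in (0 : ℝ)..t, G s x) (t : ℝ) :
    ‖D t‖ ≤ |∫ s in (0 : ℝ)..t, g s| := by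
  have hD0 : D 0 = 0 := by ext x; simp [hD]
  simpa [hD0] using norm_sub_le_abs_integral_of_apply_eq_integral hG hg hGg hD 0 t

end IntegralOperator

theorem abs_integral_abs_pow (l : ℕ) (t : ℝ) :
    |∫ s in (0 : ℝ)..t, |s| ^ l| = |t| ^ (l + 1) / (l + 1) := by
  have of_nonneg : ∀ u : ℝ, 0 ≤ u → ∫ s in (0 : ℝ)..u, |s| ^ l = u ^ (l + 1) / (l + 1) := by
    intro u hu
    have habs : Set.EqOn (fun s : ℝ => |s| ^ l) (fun s => s ^ l) (Set.uIcc 0 u) := by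
      intro s hs
      rw [Set.uIcc_of_le hu] at hs
      simp [abs_of_nonneg hs.1]
    simp [intervalIntegral.integral_congr habs, integral_pow]
  rcases le_or_gt 0 t with ht | ht
  · rw [of_nonneg t ht, abs_of_nonneg ht, abs_of_nonneg (by positivity)]
  · have hneg : ∫ s in (0 : ℝ)..t, |s| ^ l = ∫ s in -t..0, |s| ^ l := by
      simpa using intervalIntegral.integral_comp_neg (a := 0) (b := t) fun s : ℝ => |s| ^ l
    rw [hneg, intervalIntegral.integral_symm, of_nonneg (-t) (by linarith), abs_neg,
      abs_of_nonneg (div_nonneg (pow_nonneg (by linarith) _) (by positivity)), abs_of_neg ht]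

theorem norm_smul_I_comp_sub_comp_le {E F : Type*} [NormedAddCommGroup E] [NormedSpace ℂ E]
    [NormedAddCommGroup F] [NormedSpace ℂ F] (B : E →L[ℂ] F) (V : E →L[ℂ] E)
    (V' : F →L[ℂ] F) : ‖Complex.I • (B ∘L V - V' ∘L B)‖ ≤ (‖V‖ + ‖V'‖) * ‖B‖ := by
  rw [norm_smul, Complex.norm_I, one_mul]
  calc ‖B ∘L V - V' ∘L B‖ ≤ ‖B‖ * ‖V‖ + ‖V'‖ * ‖B‖ :=
        (norm_sub_le _ _).trans (add_le_add (B.opNorm_comp_le V) (V'.opNorm_comp_le B))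
    _ = (‖V‖ + ‖V'‖) * ‖B‖ := by ring

theorem summable_pow_div_factorial_mul_pow_mul (t c M : ℝ) :
    Summable fun l : ℕ => t ^ l / (l ! : ℝ) * c ^ l * M := by
  refine ((Real.summable_pow_div_factorial (t * c)).mul_right M).congr fun l => ?_
  rw [mul_pow]
  ring

section DysonSeries

variable {E F : Type*} [NormedAddCommGroup E] [NormedSpace ℂ E]
  [NormedAddCommGroup F] [NormedSpace ℂ F]
  {V : ℝ → E →L[ℂ] E} {V' : ℝ → F →L[ℂ] F} {a b : ℝ} {A : E →L[ℂ] F}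
  {D : ℕ → ℝ → E →L[ℂ] F}

theorem dyson_term_norm_le_and_continuous (hV : ∀ s, ‖V s‖ ≤ a) (hV' : ∀ s, ‖V' s‖ ≤ b)
    (hVc : ∀ x, Continuous fun s => V s x) (hV'c : ∀ x, Continuous fun s => V' s x)
    (hD0 : ∀ t, D 0 t = A)
    (hDrec : ∀ l t x, D (l + 1) t x
      = ∫ s in (0 : ℝ)..t, (Complex.I • (D l s ∘L V s - V' s ∘L D l s)) x) (l : ℕ) :
    (∀ t, ‖D l t‖ ≤ |t| ^ l / (l ! : ℝ) * (a + b) ^ l * ‖A‖) ∧ Continuous (D l) := by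
  induction l with
  | zero => exact ⟨fun t => by simp [hD0], continuous_const.congr fun t => (hD0 t).symm⟩
  | succ l ih =>
    obtain ⟨hbound, hcont⟩ := ih
    have hab : 0 ≤ a + b := add_nonneg ((norm_nonneg _).trans (hV 0))
      ((norm_nonneg _).trans (hV' 0))
    set c := (a + b) ^ (l + 1) * ‖A‖ / (l ! : ℝ) with hc_def
    have hc : 0 ≤ c := by rw [hc_def]; positivity
    have hGc : ∀ x, Continuous fun s => (Complex.I • (D l s ∘L V s - V' s ∘L D l s)) x := by
      intro x
      have hVD : Continuous fun s => V' s (D l s x) :=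
        continuous_clm_apply_of_forall_norm_le hV' hV'c (hcont.clm_apply continuous_const)
      simpa using (show Continuous fun s => Complex.I • (D l s (V s x) - V' s (D l s x)) from
        ((hcont.clm_apply (hVc x)).sub hVD).const_smul Complex.I)
    have hGg : ∀ s, ‖Complex.I • (D l s ∘L V s - V' s ∘L D l s)‖ ≤ c * |s| ^ l := by
      intro s
      calc _ ≤ (‖V s‖ + ‖V' s‖) * ‖D l s‖ := norm_smul_I_comp_sub_comp_le _ _ _
        _ ≤ (a + b) * (|s| ^ l / (l ! : ℝ) * (a + b) ^ l * ‖A‖) := by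
            gcongr
            · exact hV s
            · exact hV' s
            · exact hbound s
        _ = c * |s| ^ l := by ring
    have hg : Continuous fun s : ℝ => c * |s| ^ l := by fun_prop
    refine ⟨fun t => ?_, continuous_of_apply_eq_integral hGc hg hGg (hDrec l)⟩
    calc ‖D (l + 1) t‖ ≤ |∫ s in (0 : ℝ)..t, c * |s| ^ l| :=
          norm_le_abs_integral_of_apply_eq_integral hGc hg hGg (hDrec l) t
      _ = c * (|t| ^ (l + 1) / (l + 1)) := by
          rw [intervalIntegral.integral_const_mul, abs_mul, abs_integral_abs_pow,
            abs_of_nonneg hc]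
      _ = |t| ^ (l + 1) / ((l + 1)! : ℝ) * (a + b) ^ (l + 1) * ‖A‖ := by
          rw [hc_def, Nat.factorial_succ, Nat.cast_mul]
          field_simp
          push_cast
          ring

end DysonSeries

theorem dyson_series_bounds_general
    {H E E' : Type*} [NormedAddCommGroup H]
    [NormedAddCommGroup E] [InnerProductSpace ℂ E]
    [NormedAddCommGroup E'] [InnerProductSpace ℂ E']
    -- the interactions Vₙ on ℱₙ and V_{n+1} on ℱ_{n+1} and their free evolutions
    (Vn : E →L[ℂ] E) (Vn1 : E' →L[ℂ] E')
    (Vs : ℝ → E →L[ℂ] E) (Vs' : ℝ → E' →L[ℂ] E')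
    (hVs_norm : ∀ s, ‖Vs s‖ = ‖Vn‖) (hVs'_norm : ∀ s, ‖Vs' s‖ = ‖Vn1‖)
    (hVs_cont : ∀ x : E, Continuous fun s => Vs s x)
    (hVs'_cont : ∀ x : E', Continuous fun s => Vs' s x)
    -- A = a*(f)|_{ℱₙ} : ℱₙ → ℱ_{n+1}, of norm ‖f‖
    (f : H) (A : E →L[ℂ] E') (hA : ‖A‖ = ‖f‖)
    -- the Dyson series terms
    (D : ℕ → ℝ → E →L[ℂ] E')
    (hD0 : ∀ t, D 0 t = A)
    (hDrec : ∀ (l : ℕ) (t : ℝ) (x : E),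
      D (l + 1) t x
        = ∫ s in (0 : ℝ)..t,
            (Complex.I • (D l s ∘L Vs s - Vs' s ∘L D l s)) x) :
    (∀ (l : ℕ) (t : ℝ),
      ‖D l t‖ ≤ |t| ^ l / (l ! : ℝ) * (‖Vn‖ + ‖Vn1‖) ^ l * ‖f‖)
    ∧ (∀ l : ℕ, Continuous fun t => D l t)
    ∧ (∀ t : ℝ, Summable fun l => ‖D l t‖) := by
  have hterm := dyson_term_norm_le_and_continuous (fun s => (hVs_norm s).le)
    (fun s => (hVs'_norm s).le) hVs_cont hVs'_cont hD0 hDrec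
  have hbound : ∀ l t, ‖D l t‖ ≤ |t| ^ l / (l ! : ℝ) * (‖Vn‖ + ‖Vn1‖) ^ l * ‖f‖ :=
    fun l => hA ▸ (hterm l).1
  exact ⟨hbound, fun l => (hterm l).2, fun t => Summable.of_nonneg_of_le
    (fun _ => norm_nonneg _) (fun l => hbound l t)
    (summable_pow_div_factorial_mul_pow_mul _ _ _)⟩

theorem dyson_series_bounds
    {H E E' : Type*} [NormedAddCommGroup H] [InnerProductSpace ℂ H]
    [NormedAddCommGroup E] [InnerProductSpace ℂ E] [CompleteSpace E]
    [NormedAddCommGroup E'] [InnerProductSpace ℂ E'] [CompleteSpace E']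
    -- the interactions Vₙ on ℱₙ and V_{n+1} on ℱ_{n+1} and their free evolutions
    (Vn : E →L[ℂ] E) (Vn1 : E' →L[ℂ] E')
    (Vs : ℝ → E →L[ℂ] E) (Vs' : ℝ → E' →L[ℂ] E')
    (hVs_norm : ∀ s, ‖Vs s‖ = ‖Vn‖) (hVs'_norm : ∀ s, ‖Vs' s‖ = ‖Vn1‖)
    (hVs_cont : ∀ x : E, Continuous fun s => Vs s x)
    (hVs'_cont : ∀ x : E', Continuous fun s => Vs' s x)
    -- A = a*(f)|_{ℱₙ} : ℱₙ → ℱ_{n+1}, of norm ‖f‖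
    (f : H) (A : E →L[ℂ] E') (hA : ‖A‖ = ‖f‖)
    -- the Dyson series terms
    (D : ℕ → ℝ → E →L[ℂ] E')
    (hD0 : ∀ t, D 0 t = A)
    (hDrec : ∀ (l : ℕ) (t : ℝ) (x : E),
      D (l + 1) t x
        = ∫ s in (0 : ℝ)..t,
            (Complex.I • (D l s ∘L Vs s - Vs' s ∘L D l s)) x) :
    (∀ (l : ℕ) (t : ℝ),
      ‖D l t‖ ≤ |t| ^ l / (l ! : ℝ) * (‖Vn‖ + ‖Vn1‖) ^ l * ‖f‖)
    ∧ (∀ l : ℕ, Continuous fun t => D l t)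
    ∧ (∀ t : ℝ, Summable fun l => ‖D l t‖) :=
  dyson_series_bounds_general Vn Vn1 Vs Vs' hVs_norm hVs'_norm hVs_cont hVs'_cont f A hA D hD0 hDrec
end
end
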